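/- Let V be a finite set with |V| ≥ 2 and S the characteristic system of edges on V. For any proper subsystem S' obtained by removing one set E_j from S, the complement F_j of E_j (within all edges on V) is a hitting set of S', but the graph (V, F_j) is not connected. -/
import Mathlib


/-- The set of cut edges between the two parts `A` and `B` of a partition. -/
def cutEdges {V : Type*} [DecidableEq V] (A B : Finset V) : Finset (Sym2 V) :=
  (A ×ˢ B).image fun p => s(p.1, p.2)

/-- The characteristic system of edges on `V`. -/
def charSystem (V : Type*) [Fintype V] [DecidableEq V] : Finset (Finset (Sym2 V)) :=
  (Finset.univ.filter fun A : Finset V => A.Nonempty ∧ A ≠ Finset.univ).image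
    fun A => cutEdges A Aᶜ

/-- The set of all (non-loop) edges on `V`. -/
def allEdges (V : Type*) [Fintype V] [DecidableEq V] : Finset (Sym2 V) :=
  Finset.univ.filter fun e : Sym2 V => ¬ e.IsDiag

lemma mem_cutEdges {V : Type*} [DecidableEq V] (A B : Finset V) (x y : V) :
    s(x, y) ∈ cutEdges A B ↔ (x ∈ A ∧ y ∈ B) ∨ (y ∈ A ∧ x ∈ B) := by
  simp only [cutEdges, Finset.mem_image, Finset.mem_product, Prod.exists, Sym2.eq_iff]
  constructor
  · rintro ⟨a, b, ⟨ha, hb⟩, (⟨rfl, rfl⟩ | ⟨rfl, rfl⟩)⟩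
    · exact Or.inl ⟨ha, hb⟩
    · exact Or.inr ⟨ha, hb⟩
  · rintro (⟨hx, hy⟩ | ⟨hy, hx⟩)
    · exact ⟨x, y, ⟨hx, hy⟩, Or.inl ⟨rfl, rfl⟩⟩
    · exact ⟨y, x, ⟨hy, hx⟩, Or.inr ⟨rfl, rfl⟩⟩

lemma mem_cut_compl {V : Type*} [Fintype V] [DecidableEq V] (A : Finset V) (x y : V) :
    s(x, y) ∈ cutEdges A Aᶜ ↔ (x ∈ A ∧ y ∉ A) ∨ (y ∈ A ∧ x ∉ A) := by
  simp [mem_cutEdges]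

lemma walk_inv {V : Type*} [Fintype V] [DecidableEq V] (A : Finset V)
    {a b : V}
    (w : (SimpleGraph.fromEdgeSet
      ((allEdges V \ cutEdges A Aᶜ : Finset (Sym2 V)) : Set (Sym2 V))).Walk a b) :
    (a ∈ A ↔ b ∈ A) := by
  induction w with
  | nil => rfl
  | cons h _ ih =>
    rename_i u v _ _ _
    refine Iff.trans ?_ ih
    rw [SimpleGraph.fromEdgeSet_adj] at h
    obtain ⟨h1, _⟩ := h
    simp only [Finset.coe_sdiff, Set.mem_diff, Finset.mem_coe, mem_cut_compl] at h1
    tauto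

/-- For any member `E_j` of the characteristic system `S` on `V` (`|V| ≥ 2`), the
complement `F_j` of `E_j` within all edges on `V` is a hitting set of `S \ {E_j}`,
but the graph `(V, F_j)` is not connected. -/
theorem charSystem_minimal {V : Type*} [Fintype V] [DecidableEq V]
    (h2 : 2 ≤ Fintype.card V) (Ej : Finset (Sym2 V)) (hEj : Ej ∈ charSystem V) :
    (∀ E ∈ charSystem V, E ≠ Ej → ((allEdges V \ Ej) ∩ E).Nonempty) ∧
    ¬ (SimpleGraph.fromEdgeSet ((allEdges V \ Ej : Finset (Sym2 V)) : Set (Sym2 V))).Connected := by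
  simp only [charSystem, Finset.mem_image, Finset.mem_filter, Finset.mem_univ, true_and] at hEj
  obtain ⟨A, ⟨hAne, hAuniv⟩, rfl⟩ := hEj
  have hAcne : Aᶜ.Nonempty := by
    rw [← Finset.compl_ne_univ_iff_nonempty, compl_compl]; exact hAuniv
  constructor
  · intro E hE hne
    simp only [charSystem, Finset.mem_image, Finset.mem_filter, Finset.mem_univ, true_and] at hE
    obtain ⟨B, ⟨hBne, hBuniv⟩, rfl⟩ := hE
    by_contra hempty
    rw [Finset.not_nonempty_iff_eq_empty] at hempty
    have cross : ∀ x ∈ B, ∀ y ∉ B, (x ∈ A ∧ y ∉ A) ∨ (y ∈ A ∧ x ∉ A) := by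
      intro x hx y hy
      have hmem : s(x, y) ∈ cutEdges B Bᶜ := by
        rw [mem_cutEdges]; exact Or.inl ⟨hx, Finset.mem_compl.mpr hy⟩
      have hxy : x ≠ y := fun h => hy (h ▸ hx)
      have hall : s(x, y) ∈ allEdges V := by
        simp [allEdges, Sym2.mk_isDiag_iff, hxy]
      have : s(x, y) ∉ allEdges V \ cutEdges A Aᶜ := by
        intro hc
        have : s(x, y) ∈ (allEdges V \ cutEdges A Aᶜ) ∩ cutEdges B Bᶜ :=
          Finset.mem_inter.mpr ⟨hc, hmem⟩
        simp [hempty] at this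
      have hEj' : s(x, y) ∈ cutEdges A Aᶜ := by
        by_contra hc
        exact this (Finset.mem_sdiff.mpr ⟨hall, hc⟩)
      rwa [mem_cut_compl] at hEj'
    have hBcne : Bᶜ.Nonempty := by
      rw [← Finset.compl_ne_univ_iff_nonempty, compl_compl]; exact hBuniv
    obtain ⟨c, hc⟩ := hBcne
    rw [Finset.mem_compl] at hc
    apply hne
    have key : B = A ∨ B = Aᶜ := by
      by_cases hcA : c ∈ A
      · right
        apply Finset.ext
        intro z
        simp only [Finset.mem_compl]
        constructor
        · intro hz
          rcases cross z hz c hc with ⟨_, h⟩ | ⟨_, h⟩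
          · exact absurd hcA h
          · exact h
        · intro hz
          by_contra hzB
          obtain ⟨b, hb⟩ := hBne
          have hbA : b ∉ A := by
            rcases cross b hb c hc with ⟨_, h⟩ | ⟨_, h⟩
            · exact absurd hcA h
            · exact h
          rcases cross b hb z hzB with ⟨h, _⟩ | ⟨h, _⟩
          · exact hbA h
          · exact hz h
      · left
        apply Finset.ext
        intro z
        constructor
        · intro hz
          rcases cross z hz c hc with ⟨h, _⟩ | ⟨h, _⟩
          · exact h
          · exact absurd h hcA
        · intro hz
          by_contra hzB
          obtain ⟨b, hb⟩ := hBne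
          have hbA : b ∈ A := by
            rcases cross b hb c hc with ⟨h, _⟩ | ⟨h, _⟩
            · exact h
            · exact absurd h hcA
          rcases cross b hb z hzB with ⟨_, h⟩ | ⟨_, h⟩
          · exact h hz
          · exact h hbA
    rcases key with rfl | rfl
    · rfl
    · apply Finset.ext
      intro e
      induction e using Sym2.ind with
      | _ x y =>
        rw [mem_cut_compl, mem_cut_compl]
        simp only [Finset.mem_compl]
        tauto
  · intro hconn
    obtain ⟨a, ha⟩ := hAne
    obtain ⟨b, hb⟩ := hAcne
    rw [Finset.mem_compl] at hb
    obtain ⟨w⟩ := hconn.preconnected a b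
    exact hb ((walk_inv A w).mp ha)
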